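/- arXiv:1505.00887 — 7 statements merged into one kernel-verified Lean document; each statement's English description precedes it below -/
import Mathlib

section
/- For the simplified weighted sum function f on n variables (n ≥ 1), the sensitivity of f at the all-zeros input is n; in particular the maximal sensitivity maxS(f) equals n. -/
open Finset

/-- the weighted sum `s(X) = (∑ k, k·x_k) mod n`, as an element of `ZMod n`. -/
def wsS {n : ℕ} [NeZero n] (X : ZMod n → Bool) : ZMod n :=
  ∑ i : ZMod n, if X i then i else 0

/-- the simplified weighted sum function `f(X) = x_{s(X)}`. -/
def wsF {n : ℕ} [NeZero n] (X : ZMod n → Bool) : Bool := X (wsS X)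

/-- the sensitivity `Sen(f, X)`: the number of coordinates whose flip changes `f`. -/
def wsSens {n : ℕ} [NeZero n] (X : ZMod n → Bool) : ℕ :=
  (Finset.univ.filter fun i : ZMod n =>
    wsF (Function.update X i (!X i)) ≠ wsF X).card

theorem stmt_0 (n : ℕ) [NeZero n] (hn : 1 ≤ n) :
    wsSens (fun _ : ZMod n => false) = n ∧ ∀ X : ZMod n → Bool, wsSens X ≤ n := by
  constructor
  · have h : ∀ i : ZMod n,
        wsF (Function.update (fun _ : ZMod n => false) i (!(false : Bool))) ≠
          wsF (fun _ : ZMod n => false) := by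
      intro i
      have hS : wsS (Function.update (fun _ : ZMod n => false) i true) = i := by
        unfold wsS
        rw [Finset.sum_eq_single i]
        · simp [Function.update_self]
        · intro b _ hb
          simp [Function.update_of_ne hb]
        · simp
      have h1 : wsF (Function.update (fun _ : ZMod n => false) i true) = true := by
        unfold wsF
        rw [hS, Function.update_self]
      have h2 : wsF (fun _ : ZMod n => false) = false := by
        unfold wsF; simp
      simp only [Bool.not_false]
      rw [h1, h2]; simp
    unfold wsSens
    rw [Finset.filter_true_of_mem (fun i _ => h i)]
    simp [ZMod.card]
  · intro X
    unfold wsSens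
    calc _ ≤ (Finset.univ : Finset (ZMod n)).card := Finset.card_filter_le _ _
    _ = n := by simp [ZMod.card]
end

section
/- Let p ≥ 3 be a prime and n a positive integer with p² | n. Then the minimal sensitivity of the simplified weighted sum function on n variables is 0, i.e., there exists an input X with Sen(f,X) = 0. -/
/-! Let `n = p m` with `p ∣ m`, and let `X` be the indicator of the residue class `1 mod p`.
Its weighted sum is `s = p (0 + 1 + ⋯ + (m - 1)) + m`, which is `0 mod p` because `p ∣ m`,
but not `0 mod n`, since `2 s = m (p (m - 1) + 2)` and `p ∤ 2`. So `s ≠ 0` is a period of `X`,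
and `f X = X s = X 0 = 0`. Flipping a zero coordinate `i` moves the sum to `s + i ≠ i`, where
`X` still reads `X i = 0`; flipping a one coordinate `i` moves it to `s - i`, which is either
`i` itself (now `0`) or lies in the class `-1 ≠ 1 mod p`. -/

open Finset

open Function

section

variable {n : ℕ} [NeZero n]

lemma sum_zmod_eq_sum_range {M : Type*} [AddCommMonoid M] (f : ZMod n → M) :
    ∑ i : ZMod n, f i = ∑ k ∈ range n, f k :=
  sum_nbij' ZMod.val (↑) (fun i _ => mem_range.2 i.val_lt) (fun _ _ => mem_univ _)
    (fun i _ => ZMod.natCast_zmod_val i) (fun _ hk => ZMod.val_cast_of_lt (mem_range.1 hk))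
    (fun i _ => by rw [ZMod.natCast_zmod_val])

lemma wsS_update_add (X : ZMod n → Bool) (i : ZMod n) (b : Bool) :
    wsS (update X i b) + (if X i then i else 0) = wsS X + (if b then i else 0) := by
  have hrest : ∑ j ∈ univ.erase i, (if update X i b j then j else 0)
      = ∑ j ∈ univ.erase i, (if X j then j else 0) :=
    sum_congr rfl fun j hj => by rw [update_of_ne (ne_of_mem_erase hj)]
  unfold wsS
  rw [← add_sum_erase _ _ (mem_univ i), ← add_sum_erase _ _ (mem_univ i), hrest, update_self]
  abel

lemma wsS_update_not (X : ZMod n → Bool) (i : ZMod n) :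
    wsS (update X i (!X i)) = if X i then wsS X - i else wsS X + i := by
  have h := wsS_update_add X i (!X i)
  cases hi : X i <;> simp only [hi, Bool.not_false, Bool.not_true, Bool.false_eq_true,
    ↓reduceIte, add_zero] at h ⊢
  · exact h
  · exact eq_sub_of_add_eq h

lemma wsSens_eq_zero_of_periodic (X : ZMod n → Bool) (hs : wsS X ≠ 0)
    (hper : ∀ i, X (wsS X + i) = X i) (h0 : X 0 = false)
    (hneg : ∀ i, X i = true → X (-i) = false) : wsSens X = 0 := by
  have hf : wsF X = false := by rw [wsF, ← add_zero (wsS X), hper, h0]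
  rw [wsSens, card_eq_zero, filter_eq_empty_iff]
  intro i _
  rw [not_not, hf, wsF, wsS_update_not]
  cases hi : X i
  · have hne : wsS X + i ≠ i := fun h => hs (add_eq_right.1 h)
    simp only [Bool.false_eq_true, ↓reduceIte, update_of_ne hne, hper, hi]
  · simp only [↓reduceIte]
    by_cases heq : wsS X - i = i
    · rw [heq, update_self, Bool.not_true]
    · rw [update_of_ne heq, sub_eq_add_neg, hper, hneg i hi]

end

lemma sum_range_mul_ite_mod_eq_one {p : ℕ} (hp : 1 < p) (m : ℕ) :
    ∑ k ∈ range (p * m), (if k % p = 1 then k else 0) = p * ∑ j ∈ range m, j + m := by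
  induction m with
  | zero => simp
  | succ m ih =>
    have hblock : ∑ k ∈ range p, (if (p * m + k) % p = 1 then p * m + k else 0) = p * m + 1 := by
      rw [sum_congr rfl fun k hk => by rw [Nat.mul_add_mod, Nat.mod_eq_of_lt (mem_range.1 hk)],
        sum_ite_eq' (range p) 1, if_pos (mem_range.2 hp)]
    rw [mul_add_one, sum_range_add, ih, hblock, sum_range_succ]
    ring

def residueOne (p : ℕ) {n : ℕ} (i : ZMod n) : Bool :=
  decide ((i.cast : ZMod p) = 1)

section

variable {p n : ℕ}

lemma residueOne_natCast (hp : 1 < p) (hpn : p ∣ n) (k : ℕ) :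
    residueOne p (k : ZMod n) = decide (k % p = 1) := by
  rw [residueOne, ZMod.cast_natCast hpn, decide_eq_decide, ← Nat.cast_one,
    ZMod.natCast_eq_natCast_iff', Nat.mod_eq_of_lt hp]

lemma residueOne_add_of_cast_eq_zero (hpn : p ∣ n) {a : ZMod n} (ha : (a.cast : ZMod p) = 0)
    (i : ZMod n) : residueOne p (a + i) = residueOne p i := by
  rw [residueOne, ZMod.cast_add hpn, ha, zero_add, residueOne]

lemma residueOne_zero (hp : p ≠ 1) : residueOne p (0 : ZMod n) = false := by
  have : Nontrivial (ZMod p) := ZMod.nontrivial_iff.2 hp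
  simp [residueOne]

lemma residueOne_neg (hp : 2 < p) (hpn : p ∣ n) {i : ZMod n} (hi : residueOne p i = true) :
    residueOne p (-i) = false := by
  have : Fact (2 < p) := ⟨hp⟩
  rw [residueOne, decide_eq_true_eq] at hi
  rw [residueOne, ZMod.cast_neg hpn, hi, decide_eq_false_iff_not]
  exact ZMod.neg_one_ne_one

lemma wsS_residueOne [NeZero n] {m : ℕ} (hp : 1 < p) (hn : n = p * m) :
    wsS (residueOne p : ZMod n → Bool) = ((p * ∑ j ∈ range m, j + m : ℕ) : ZMod n) := by
  subst hn
  rw [wsS, sum_zmod_eq_sum_range, ← sum_range_mul_ite_mod_eq_one hp m]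
  push_cast
  refine sum_congr rfl fun k _ => ?_
  simp only [residueOne_natCast hp (dvd_mul_right p m), decide_eq_true_eq]

end

lemma not_mul_dvd_mul_sum_range_add {p m : ℕ} (hp : ¬ p ∣ 2) (hm : m ≠ 0) :
    ¬ p * m ∣ p * ∑ j ∈ range m, j + m := by
  intro h
  have htwice : (p * ∑ j ∈ range m, j + m) * 2 = m * (p * (m - 1) + 2) := by
    rw [add_mul, mul_assoc, sum_range_id_mul_two]
    ring
  have h2 : m * p ∣ m * (p * (m - 1) + 2) := by
    rw [← htwice, mul_comm m p]
    exact dvd_mul_of_dvd_left h 2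
  exact hp ((Nat.dvd_add_right (dvd_mul_right p _)).1 ((mul_dvd_mul_iff_left hm).1 h2))

section

variable {p n m : ℕ} [NeZero n]

lemma cast_wsS_residueOne (hp : 1 < p) (hn : n = p * m) (hpm : p ∣ m) :
    ((wsS (residueOne p : ZMod n → Bool)).cast : ZMod p) = 0 := by
  rw [wsS_residueOne hp hn, ZMod.cast_natCast (hn ▸ dvd_mul_right p m), ZMod.natCast_eq_zero_iff]
  exact dvd_add (dvd_mul_right p _) hpm

lemma wsS_residueOne_ne_zero (hp : 2 < p) (hn : n = p * m) :
    wsS (residueOne p : ZMod n → Bool) ≠ 0 := by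
  have hm : m ≠ 0 := by
    rintro rfl
    exact NeZero.ne n (by simpa using hn)
  rw [wsS_residueOne (one_lt_two.trans hp) hn, Ne, ZMod.natCast_eq_zero_iff, hn]
  exact not_mul_dvd_mul_sum_range_add (fun h => by have := Nat.le_of_dvd two_pos h; omega) hm

end

theorem stmt_1_general (p n : ℕ) (hp3 : 3 ≤ p) [NeZero n]
    (hdvd : p ^ 2 ∣ n) :
    ∃ X : ZMod n → Bool, wsSens X = 0 := by
  obtain ⟨t, ht⟩ := hdvd
  have hn : n = p * (p * t) := by rw [ht]; ring
  have hpn : p ∣ n := hn ▸ dvd_mul_right p _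
  have hs : ((wsS (residueOne p : ZMod n → Bool)).cast : ZMod p) = 0 :=
    cast_wsS_residueOne (by omega) hn (dvd_mul_right p t)
  exact ⟨residueOne p, wsSens_eq_zero_of_periodic _ (wsS_residueOne_ne_zero hp3 hn)
    (residueOne_add_of_cast_eq_zero hpn hs) (residueOne_zero (by omega))
    fun _ => residueOne_neg hp3 hpn⟩

theorem stmt_1 (p n : ℕ) (hp : p.Prime) (hp3 : 3 ≤ p) (hn : 0 < n) [NeZero n]
    (hdvd : p ^ 2 ∣ n) :
    ∃ X : ZMod n → Bool, wsSens X = 0 :=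
  stmt_1_general p n hp3 hdvd
end

section
/- Let p ≥ 3 be prime and n = p²q. For the input X₁ ∈ {0,1}^n with x_i = 1 iff i ≡ p−1 (mod p), the sensitivity of the simplified weighted sum function f at X₁ is 0: flipping any single coordinate of X₁ does not change the value of f. -/
open Finset

/-!
The ones of `X₁` form the residue class `-1 mod p`. Their sum `s` is `0 mod p`, but it is not `0`
in `ℤ/n` because `p ∤ 2`, so `f(X₁) = x_s = 0`. Flipping a one at `i` moves `s` to
`s - i ≡ 1 (mod p)`, which is not a one of the new input (or is `i`, now zero); flipping a zero at
`i` moves `s` to `s + i ≠ i`, which lies in the class of `i` mod `p` and so carries a zero.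
-/

theorem ZMod.sum_univ_eq_sum_range {M : Type*} [AddCommMonoid M] {n : ℕ} [NeZero n]
    (f : ZMod n → M) : ∑ i : ZMod n, f i = ∑ k ∈ range n, f k :=
  sum_nbij' ZMod.val Nat.cast (fun a _ ↦ mem_range.2 a.val_lt) (fun _ _ ↦ mem_univ _)
    (fun a _ ↦ a.natCast_zmod_val) (fun _ hk ↦ ZMod.val_natCast_of_lt (mem_range.1 hk))
    (fun a _ ↦ by rw [a.natCast_zmod_val])

theorem sum_range_mul_ite_mod_eq_pred (p m : ℕ) (hp : 0 < p) :
    ∑ k ∈ range (p * m), (if k % p = p - 1 then k else 0) = p * ∑ j ∈ range m, j + m * (p - 1) := by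
  induction m with
  | zero => simp
  | succ m ih =>
    have hblock : ∑ t ∈ range p, (if (p * m + t) % p = p - 1 then p * m + t else 0)
        = p * m + (p - 1) := by
      rw [sum_congr rfl fun t ht ↦ by rw [Nat.mul_add_mod, Nat.mod_eq_of_lt (mem_range.1 ht)],
        sum_ite_eq', if_pos (mem_range.2 (by omega))]
    rw [Nat.mul_succ, sum_range_add, ih, hblock, sum_range_succ]
    ring

section
variable {n : ℕ} [NeZero n]

theorem wsS_update (X : ZMod n → Bool) (i : ZMod n) (b : Bool) :
    wsS (Function.update X i b) = wsS X - (if X i then i else 0) + (if b then i else 0) := by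
  have hfun : (fun j ↦ if Function.update X i b j then j else 0)
      = Function.update (fun j ↦ if X j then j else (0 : ZMod n)) i (if b then i else 0) := by
    ext j
    rcases eq_or_ne j i with rfl | hji <;> simp [*]
  rw [wsS, wsS, hfun, sum_update_of_mem (mem_univ i), ← add_sum_erase _ _ (mem_univ i),
    sdiff_singleton_eq_erase]
  abel

theorem wsSens_eq_zero_of_level_set {G : Type*} [AddCommGroup G] [DecidableEq G] (φ : ZMod n →+ G) {c : G}
    (hc : c ≠ 0) (hc' : -c ≠ c) (hs : φ (wsS fun i ↦ decide (φ i = c)) = 0)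
    (hs₀ : wsS (fun i ↦ decide (φ i = c)) ≠ 0) : wsSens (fun i ↦ decide (φ i = c)) = 0 := by
  set X : ZMod n → Bool := fun i ↦ decide (φ i = c)
  have hfX : wsF X = false := by simp [wsF, X, hs, hc.symm]
  rw [wsSens, card_eq_zero, filter_eq_empty_iff]
  intro i _
  rw [hfX, not_not, wsF]
  by_cases hi : φ i = c
  · have hXi : X i = true := decide_eq_true hi
    rw [hXi, wsS_update, hXi]
    by_cases hsi : wsS X - i = i
    · simp [hsi]
    · simp [Function.update_of_ne, hsi, X, hs, hi, hc']
  · have hXi : X i = false := decide_eq_false hi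
    have hsi : wsS X + i ≠ i := fun h ↦ hs₀ (by simpa using h)
    rw [hXi, wsS_update, hXi]
    simp [Function.update_of_ne, hsi, X, hs, hi]

end

theorem ZMod.natCast_eq_neg_one_iff {p : ℕ} [NeZero p] (a : ℕ) :
    (a : ZMod p) = -1 ↔ a % p = p - 1 := by
  obtain ⟨b, rfl⟩ := Nat.exists_eq_succ_of_ne_zero (NeZero.ne p)
  rw [eq_neg_iff_add_eq_zero, ← Nat.cast_one, ← Nat.cast_add, ZMod.natCast_eq_zero_iff,
    Nat.dvd_iff_mod_eq_zero, Nat.succ_mod_succ_eq_zero_iff, Nat.succ_sub_one]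

theorem wsS_residue_pattern {n : ℕ} [NeZero n] {p m : ℕ} (hp : 0 < p) (hn : n = p * m) :
    wsS (fun i : ZMod n ↦ decide (i.val % p = p - 1))
      = ((p * ∑ j ∈ range m, j + m * (p - 1) : ℕ) : ZMod n) := by
  rw [wsS, ZMod.sum_univ_eq_sum_range, ← sum_range_mul_ite_mod_eq_pred p m hp, ← hn,
    Nat.cast_sum]
  refine sum_congr rfl fun k hk ↦ ?_
  rw [ZMod.val_natCast_of_lt (mem_range.1 hk)]
  split_ifs <;> simp_all

theorem not_mul_dvd_residue_pattern_sum {p m : ℕ} (hp : 3 ≤ p) (hm : m ≠ 0) :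
    ¬ p * m ∣ p * ∑ j ∈ range m, j + m * (p - 1) := by
  rintro ⟨c, hc⟩
  have hgauss := sum_range_id_mul_two m
  have hzero : (m : ℤ) * (2 - p * (m + 1 - 2 * c)) = 0 := by
    zify [show 1 ≤ m by omega, show 1 ≤ p by omega] at hc hgauss
    linear_combination -2 * hc + p * hgauss
  have htwo : (p : ℤ) ∣ 2 :=
    ⟨m + 1 - 2 * c, by linarith [(mul_eq_zero.1 hzero).resolve_left (by exact_mod_cast hm)]⟩
  have := Int.le_of_dvd two_pos htwo
  omega

theorem stmt_3_general (p q n : ℕ) (hp3 : 3 ≤ p) (hn : n = p ^ 2 * q) [NeZero n] :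
    wsSens (fun i : ZMod n => decide (i.val % p = p - 1)) = 0 := by
  have hq : q ≠ 0 := by rintro rfl; exact NeZero.ne n (by simp [hn])
  have : Fact (1 < p) := ⟨by omega⟩
  have : Fact (2 < p) := ⟨hp3⟩
  have hnm : n = p * (p * q) := by rw [hn]; ring
  let ψ : ZMod n →+* ZMod p := ZMod.castHom (Dvd.intro _ hnm.symm) (ZMod p)
  have hX : (fun i : ZMod n ↦ decide (i.val % p = p - 1))
      = fun i ↦ decide ((ψ : ZMod n →+ ZMod p) i = -1) := by
    funext i
    exact decide_eq_decide.2 (by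
      rw [AddMonoidHom.coe_coe, ZMod.castHom_apply, ZMod.cast_eq_val,
        ZMod.natCast_eq_neg_one_iff])
  have hs := wsS_residue_pattern (by omega) hnm
  rw [hX] at hs ⊢
  refine wsSens_eq_zero_of_level_set _ (neg_ne_zero.2 one_ne_zero)
    (by rw [neg_neg]; exact ZMod.neg_one_ne_one.symm) ?_ ?_
  · rw [hs, AddMonoidHom.coe_coe, map_natCast, ZMod.natCast_eq_zero_iff]
    exact dvd_add (dvd_mul_right _ _) (dvd_mul_of_dvd_left (dvd_mul_right _ _) _)
  · rw [hs, Ne, ZMod.natCast_eq_zero_iff, hnm]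
    exact not_mul_dvd_residue_pattern_sum hp3 (mul_ne_zero (by omega) hq)

theorem stmt_3 (p q n : ℕ) (hp : p.Prime) (hp3 : 3 ≤ p) (hq : 0 < q)
    (hn : n = p ^ 2 * q) [NeZero n] :
    wsSens (fun i : ZMod n => decide (i.val % p = p - 1)) = 0 :=
  stmt_3_general p q n hp3 hn
end

section
/- If n ≡ 2 (mod 4), then the sensitivity of the simplified weighted sum function at the all-ones input is 0. -/
open Finset

lemma sum_zmod_univ (n : ℕ) [NeZero n] :
    (∑ i : ZMod n, i) = ((n * (n - 1) / 2 : ℕ) : ZMod n) := by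
  rw [← Finset.sum_range_id, Nat.cast_sum]
  refine (Finset.sum_bij (fun k _ => ((k : ℕ) : ZMod n)) ?_ ?_ ?_ ?_).symm
  · intro a _; exact Finset.mem_univ _
  · intro a ha b hb h
    simp only [Finset.mem_range] at ha hb
    have := congrArg ZMod.val h
    rwa [ZMod.val_cast_of_lt ha, ZMod.val_cast_of_lt hb] at this
  · intro b _
    exact ⟨b.val, Finset.mem_range.mpr (ZMod.val_lt b),
      by show ((b.val : ℕ) : ZMod n) = b; rw [ZMod.natCast_val, ZMod.cast_id]⟩
  · intro a _; rfl

lemma cast_half (n : ℕ) [NeZero n] (hn : n % 4 = 2) :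
    ((n * (n - 1) / 2 : ℕ) : ZMod n) = ((n / 2 : ℕ) : ZMod n) := by
  obtain ⟨m, rfl⟩ : ∃ m, n = 4 * m + 2 := ⟨(n - 2) / 4, by omega⟩
  have h1 : (4 * m + 2) * (4 * m + 2 - 1) / 2 = 2 * m * (4 * m + 2) + (2 * m + 1) := by
    have : (4 * m + 2) * (4 * m + 2 - 1) = 2 * (2 * m * (4 * m + 2) + (2 * m + 1)) := by
      have h : 4 * m + 2 - 1 = 4 * m + 1 := by omega
      rw [h]; ring
    omega
  have h2 : (4 * m + 2) / 2 = 2 * m + 1 := by omega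
  rw [h1, h2, Nat.cast_add, Nat.cast_mul, ZMod.natCast_self, mul_zero, zero_add]

lemma half_ne_double (n : ℕ) [NeZero n] (hn : n % 4 = 2) (i : ZMod n) :
    ((n / 2 : ℕ) : ZMod n) ≠ i + i := by
  intro h
  have h2 : 2 ∣ n := by omega
  have hlt : n / 2 < n := Nat.div_lt_self (Nat.pos_of_ne_zero (NeZero.ne n)) one_lt_two
  have hv := congrArg ZMod.val h
  rw [ZMod.val_cast_of_lt hlt, ZMod.val_add] at hv
  have hparity : (i.val + i.val) % n % 2 = 0 := by
    rw [Nat.mod_mod_of_dvd _ h2]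
    omega
  rw [← hv] at hparity
  omega

theorem stmt_4 (n : ℕ) [NeZero n] (hn : n % 4 = 2) :
    wsSens (fun _ : ZMod n => true) = 0 := by
  rw [wsSens, Finset.card_eq_zero, Finset.filter_eq_empty_iff]
  intro i _
  simp only [ne_eq, not_not]
  have hupd : wsS (Function.update (fun _ : ZMod n => true) i (!true)) =
      ((n / 2 : ℕ) : ZMod n) - i := by
    rw [wsS]
    have hfun : (fun j : ZMod n =>
        if Function.update (fun _ : ZMod n => true) i (!true) j then j else 0)
        = Function.update (fun j : ZMod n => j) i 0 := by
      funext j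
      by_cases hj : j = i
      · subst hj; simp
      · simp [Function.update_of_ne hj]
    rw [hfun, Finset.sum_update_of_mem (Finset.mem_univ i), zero_add]
    have hsplit : (∑ j ∈ Finset.univ \ {i}, j) = (∑ j : ZMod n, j) - i := by
      rw [Finset.sum_sdiff_eq_sub (Finset.singleton_subset_iff.mpr (Finset.mem_univ i)),
        Finset.sum_singleton]
    rw [hsplit, sum_zmod_univ, cast_half n hn]
  have hF : wsF (fun _ : ZMod n => true) = true := rfl
  rw [hF, wsF, hupd]
  have hne : ((n / 2 : ℕ) : ZMod n) - i ≠ i := by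
    intro h
    exact half_ne_double n hn i (by linear_combination h)
  rw [Function.update_of_ne hne]
end

section
/- If n is odd, then the sensitivity of the simplified weighted sum function at the all-ones input is exactly 1, and the unique sensitive coordinate is index 0. -/
open Finset

lemma sum_zmod_eq_zero (n : ℕ) [NeZero n] (hn : Odd n) :
    ∑ i : ZMod n, i = 0 := by
  have h : ∑ i : ZMod n, i = ∑ i : ZMod n, -i :=
    (Fintype.sum_equiv (Equiv.neg (ZMod n)) _ _ (fun i => rfl)).symm
  have h2 : (2 : ZMod n) * ∑ i : ZMod n, i = 0 := by
    rw [two_mul]; nth_rewrite 2 [h]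
    rw [← Finset.sum_add_distrib]; simp
  have hu : IsUnit (2 : ZMod n) := by
    rw [show (2 : ZMod n) = ((2 : ℕ) : ZMod n) by norm_cast, ZMod.isUnit_iff_coprime]
    exact Nat.coprime_two_left.mpr hn
  exact (hu.mul_right_eq_zero).mp h2

lemma neg_eq_self_zmod {n : ℕ} [NeZero n] (hn : Odd n) (i : ZMod n) :
    -i = i ↔ i = 0 := by
  rw [ZMod.neg_eq_self_iff]
  constructor
  · rintro (h | h)
    · exact h
    · exfalso; exact ((fun h2 => (Nat.not_odd_iff_even.mpr h2)) ⟨i.val, by omega⟩) hn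
  · exact Or.inl

lemma wsS_update_s5 (n : ℕ) [NeZero n] (hn : Odd n) (i : ZMod n) :
    wsS (Function.update (fun _ : ZMod n => true) i false) = -i := by
  unfold wsS
  have : ∀ j : ZMod n,
      (if Function.update (fun _ : ZMod n => true) i false j then j else 0)
        = Function.update (fun j : ZMod n => j) i 0 j := by
    intro j
    by_cases h : j = i <;> simp [h, Function.update]
  rw [Finset.sum_congr rfl (fun j _ => this j),
    Finset.sum_update_of_mem (Finset.mem_univ i), zero_add, ← Finset.erase_eq,
    Finset.sum_erase_eq_sub (Finset.mem_univ i), sum_zmod_eq_zero n hn, zero_sub]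

theorem stmt_5 (n : ℕ) [NeZero n] (hn : Odd n) :
    wsSens (fun _ : ZMod n => true) = 1 ∧
      ∀ i : ZMod n,
        wsF (Function.update (fun _ : ZMod n => true) i (!(true : Bool))) ≠
            wsF (fun _ : ZMod n => true) ↔ i = 0 := by
  have hS : wsS (fun _ : ZMod n => true) = 0 := by
    unfold wsS; simpa using sum_zmod_eq_zero n hn
  have hF : wsF (fun _ : ZMod n => true) = true := rfl
  have key : ∀ i : ZMod n,
      wsF (Function.update (fun _ : ZMod n => true) i (!(true : Bool))) ≠
          wsF (fun _ : ZMod n => true) ↔ i = 0 := by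
    intro i
    have h1 : wsF (Function.update (fun _ : ZMod n => true) i (!(true : Bool)))
        = Function.update (fun _ : ZMod n => true) i false (-i) := by
      simp only [Bool.not_true]
      unfold wsF
      rw [wsS_update_s5 n hn i]
    rw [h1, hF]
    by_cases h : i = 0
    · subst h; simp [Function.update]
    · have hne : -i ≠ i := fun hc => h ((neg_eq_self_zmod hn i).mp hc)
      simp [Function.update, hne, h]
  refine ⟨?_, key⟩
  unfold wsSens
  have : (Finset.univ.filter fun i : ZMod n =>
      wsF (Function.update (fun _ : ZMod n => true) i (!(true : Bool))) ≠
        wsF (fun _ : ZMod n => true)) = {0} := by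
    ext i
    simp only [Finset.mem_filter, Finset.mem_univ, true_and, Finset.mem_singleton]
    exact key i
  rw [this, Finset.card_singleton]
end

section
/- Let p > 4 be prime and n = p. For the input X with x_0 = 1 and x_i = 0 for 0 < i < p, the sensitivity of the simplified weighted sum function at X is exactly 1. -/
open Finset

/-!
Write `X = 1_{{0}}`. Its weighted sum is `0`, so `f(X) = x_0 = 1`. Flipping `x_0` gives the zero
vector, where `f = 0`; flipping `x_i` with `i ≠ 0` gives `1_{{0, i}}`, whose weighted sum is `i`, so
`f` still reads the set coordinate `x_i = 1`. Only the flip of `x_0` changes `f`.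
-/

lemma update_decide_mem {α : Type*} [DecidableEq α] (s : Finset α) (i : α) :
    Function.update (fun j => decide (j ∈ s)) i (!decide (i ∈ s)) =
      fun j => decide (j ∈ symmDiff s {i}) := by
  funext j
  by_cases hj : j = i
  · subst hj
    simp [Finset.mem_symmDiff]
  · simp [Finset.mem_symmDiff, hj]

section

variable {n : ℕ} [NeZero n]

lemma wsS_decide_mem (s : Finset (ZMod n)) :
    wsS (fun i => decide (i ∈ s)) = ∑ i ∈ s, i := by
  simp only [wsS, decide_eq_true_eq, Finset.sum_ite_mem, Finset.univ_inter]

lemma wsF_decide_mem (s : Finset (ZMod n)) :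
    wsF (fun i => decide (i ∈ s)) = decide (∑ i ∈ s, i ∈ s) := by
  rw [wsF, wsS_decide_mem]

lemma wsSens_decide_mem (s : Finset (ZMod n)) :
    wsSens (fun i => decide (i ∈ s)) =
      #{i | wsF (fun j => decide (j ∈ symmDiff s {i})) ≠ wsF (fun j => decide (j ∈ s))} := by
  simp only [wsSens, update_decide_mem]

lemma wsF_flip_singleton_zero_ne_iff (i : ZMod n) :
    wsF (fun j => decide (j ∈ symmDiff ({0} : Finset (ZMod n)) {i})) ≠
        wsF (fun j => decide (j ∈ ({0} : Finset (ZMod n)))) ↔ i = 0 := by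
  rw [wsF_decide_mem, wsF_decide_mem]
  by_cases hi : i = 0
  · subst hi
    simp
  · have hflip : symmDiff ({0} : Finset (ZMod n)) {i} = {0, i} := by
      ext j
      simp only [Finset.mem_symmDiff, Finset.mem_singleton, Finset.mem_insert]
      grind
    simp [hflip, hi, Finset.sum_pair (Ne.symm hi)]

end

theorem stmt_10_general (p : ℕ) [NeZero p] :
    wsSens (fun i : ZMod p => decide (i = 0)) = 1 := by
  have hX : (fun i : ZMod p => decide (i = 0)) = fun i => decide (i ∈ ({0} : Finset (ZMod p))) := by
    simp only [Finset.mem_singleton]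
  rw [hX, wsSens_decide_mem, Finset.card_eq_one]
  exact ⟨0, by ext i; simpa using wsF_flip_singleton_zero_ne_iff i⟩

theorem stmt_10 (p : ℕ) (hp : p.Prime) (hp4 : 4 < p) [NeZero p] :
    wsSens (fun i : ZMod p => decide (i = 0)) = 1 :=
  stmt_10_general p
end

section
/- Let p > 4 be prime and n = p. Then there is no input X ∈ {0,1}^p with Sen(f,X) = 0 for the simplified weighted sum function f; equivalently, every input has at least one sensitive coordinate. -/
open Finset

/-! Suppose no coordinate of `X` is sensitive and write `s = s(X)`. Flipping `x_0` leaves `s` unchanged,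
so `s ≠ 0`. Flipping a `0` at `i` moves `s` to `s + i` and flipping a `1` moves it to `s - i`, so
`x_{s+i} = x_s` whenever `x_i = 0`, while if `x_s = 1` then `s - i ≠ i` and `x_{s-i} = 1` whenever
`x_i = 1`.
If `x_s = 0`, the zeros are closed under `+ s`, hence everything is `0` and `s = 0`. If `x_s = 1`,
the support `T` is stable under `i ↦ s - i`, so `|T| s = 2 ∑_T i = 2 s` and `|T| = 2`; but
`i ↦ s + i` injects the `p - 2` zeros into `T`, forcing `p ≤ 4`. -/

theorem Finset.card_nsmul_eq_two_nsmul_sum {G : Type*} [AddCommGroup G] {T : Finset G} {s : G}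
    (hT : ∀ i ∈ T, s - i ∈ T) : #T • s = 2 • ∑ i ∈ T, i := by
  have hreflect : ∑ i ∈ T, (s - i) = ∑ i ∈ T, i :=
    Finset.sum_nbij' (s - ·) (s - ·) hT hT (by simp) (by simp) (fun _ _ => rfl)
  rw [Finset.sum_sub_distrib, Finset.sum_const, sub_eq_iff_eq_add] at hreflect
  rw [hreflect, two_nsmul]

theorem ZMod.forall_of_forall_add_mem {p : ℕ} [Fact p.Prime] {s : ZMod p} (hs : s ≠ 0)
    {P : ZMod p → Prop} {x : ZMod p} (hx : P x) (hadd : ∀ y, P y → P (y + s)) (y : ZMod p) :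
    P y := by
  have hmul : ∀ k : ℕ, P (x + k * s) := by
    intro k
    induction k with
    | zero => simpa using hx
    | succ k ih => simpa [add_mul, add_assoc] using hadd _ ih
  simpa [ZMod.natCast_zmod_val, mul_assoc, inv_mul_cancel₀ hs] using hmul ((y - x) * s⁻¹).val

section WeightedSum

variable {n : ℕ} [NeZero n]

theorem wsS_eq_sum_support (X : ZMod n → Bool) : wsS X = ∑ i ∈ univ.filter (X · = true), i := by
  rw [wsS, Finset.sum_filter]

theorem wsS_flip_of_false {X : ZMod n → Bool} {i : ZMod n} (hi : X i = false) :
    wsS (Function.update X i (!X i)) = wsS X + i := by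
  simp [wsS_update, hi]

theorem wsS_flip_of_true {X : ZMod n → Bool} {i : ZMod n} (hi : X i = true) :
    wsS (Function.update X i (!X i)) = wsS X - i := by
  simp [wsS_update, hi]

theorem wsSens_eq_zero_iff (X : ZMod n → Bool) :
    wsSens X = 0 ↔ ∀ i, wsF (Function.update X i (!X i)) = wsF X := by
  simp [wsSens, Finset.filter_eq_empty_iff]

end WeightedSum

section Insensitive

variable {n : ℕ} [NeZero n] {X : ZMod n → Bool}
  (hX : ∀ i, wsF (Function.update X i (!X i)) = wsF X)
include hX

theorem wsS_ne_zero_of_insensitive : wsS X ≠ 0 := by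
  intro h0
  have hflip := hX 0
  have hs : wsS (Function.update X 0 (!X 0)) = wsS X := by rw [wsS_update]; simp
  rw [wsF, wsF, hs, h0, Function.update_self] at hflip
  simp at hflip

theorem apply_wsS_add_of_insensitive {i : ZMod n} (hi : X i = false) :
    X (wsS X + i) = X (wsS X) := by
  have hne : wsS X + i ≠ i := by simpa using wsS_ne_zero_of_insensitive hX
  simpa [wsF, wsS_flip_of_false hi, Function.update_of_ne hne] using hX i

theorem wsS_sub_ne_of_insensitive (hs : X (wsS X) = true) {i : ZMod n} (hi : X i = true) :
    wsS X - i ≠ i := by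
  intro heq
  have hflip := hX i
  rw [wsF, wsF, wsS_flip_of_true hi, heq, Function.update_self, hi, hs] at hflip
  simp at hflip

theorem apply_wsS_sub_of_insensitive (hs : X (wsS X) = true) {i : ZMod n} (hi : X i = true) :
    X (wsS X - i) = true := by
  have hne := wsS_sub_ne_of_insensitive hX hs hi
  simpa [wsF, wsS_flip_of_true hi, Function.update_of_ne hne, hs] using hX i

end Insensitive

section Prime

variable {p : ℕ} [Fact p.Prime] {X : ZMod p → Bool}
  (hX : ∀ i, wsF (Function.update X i (!X i)) = wsF X)
include hX

theorem apply_wsS_of_insensitive : X (wsS X) = true := by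
  by_contra hs
  rw [Bool.not_eq_true] at hs
  have hzero : ∀ y, X y = false :=
    ZMod.forall_of_forall_add_mem (wsS_ne_zero_of_insensitive hX) hs fun y hy => by
      rw [add_comm, apply_wsS_add_of_insensitive hX hy, hs]
  exact wsS_ne_zero_of_insensitive hX (by simp [wsS, hzero])

theorem card_support_of_insensitive (hp : 2 < p) : #(univ.filter (X · = true)) = 2 := by
  set T := univ.filter (X · = true)
  have hs := apply_wsS_of_insensitive hX
  have hcast : (#T : ZMod p) * wsS X = 2 * wsS X := by
    have h := Finset.card_nsmul_eq_two_nsmul_sum (T := T) (s := wsS X) fun i hi => by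
      simpa [T] using apply_wsS_sub_of_insensitive hX hs (by simpa [T] using hi)
    rwa [← wsS_eq_sum_support, nsmul_eq_mul, nsmul_eq_mul, Nat.cast_ofNat] at h
  have hmod : (#T : ZMod p) = ((2 : ℕ) : ZMod p) := by
    exact_mod_cast mul_right_cancel₀ (wsS_ne_zero_of_insensitive hX) hcast
  rw [ZMod.natCast_eq_natCast_iff', Nat.mod_eq_of_lt (by omega : 2 < p)] at hmod
  have hle : #T ≤ p := by simpa using Finset.card_le_univ T
  rcases hle.lt_or_eq with hlt | heq
  · rwa [Nat.mod_eq_of_lt hlt] at hmod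
  · rw [heq, Nat.mod_self] at hmod
    omega

theorem card_zeros_le_card_support_of_insensitive :
    #(univ.filter (X · = false)) ≤ #(univ.filter (X · = true)) := by
  refine Finset.card_le_card_of_injOn (wsS X + ·) (fun i hi => ?_) (add_right_injective _).injOn
  simp only [coe_filter, mem_univ, true_and, Set.mem_ofPred_eq] at hi ⊢
  rw [apply_wsS_add_of_insensitive hX hi, apply_wsS_of_insensitive hX]

end Prime

theorem stmt_11 (p : ℕ) (hp : p.Prime) (hp4 : 4 < p) [NeZero p] :
    ¬ ∃ X : ZMod p → Bool, wsSens X = 0 := by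
  have := Fact.mk hp
  rintro ⟨X, hX⟩
  rw [wsSens_eq_zero_iff] at hX
  have hpart : #(univ.filter (X · = true)) + #(univ.filter (X · = false)) = p := by
    simpa using Finset.card_filter_add_card_filter_not (s := univ) (X · = true)
  have htwo := card_support_of_insensitive hX (by omega)
  have hzeros := card_zeros_le_card_support_of_insensitive hX
  omega
end
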